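/- arXiv:1702.08065 — 4 statements merged into one kernel-verified Lean document; each statement's English description precedes it below -/
import Mathlib

section
/- The greedy threshold schedule b* is feasible: for every t ∈ {1,…,T}, |b*(t)| ≤ P_max, the value b*(t) has the same sign as r(t) (i.e. b*(t) ≥ 0 when r(t) ≥ 0 and b*(t) ≤ 0 when r(t) < 0), and SoC_min ≤ SoC*(t) ≤ SoC_max for all t ∈ {1,…,T+1}. -/
open Finset

/-- State-of-charge trajectory of a battery schedule `b : ℕ → ℝ` (times `1,…,T`):
`SoC 1 = SoC_init` and `SoC (t+1) = SoC t + (η_c·b^ch(t) − b^dc(t)/η_d)·t_s/E`,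
where `b^ch(t) = max (−b t) 0` and `b^dc(t) = max (b t) 0`. -/
noncomputable def socTraj (SoCinit ts E ηc ηd : ℝ) (b : ℕ → ℝ) (t : ℕ) : ℝ :=
  SoCinit + (∑ τ ∈ Finset.Icc 1 (t - 1),
    (ηc * max (-(b τ)) 0 - max (b τ) 0 / ηd)) * ts / E

/-- Feasibility of a battery schedule: power limit at each `t ∈ {1,…,T}` and
state-of-charge bounds at each `t ∈ {1,…,T+1}`. -/
def FeasibleSchedule (T : ℕ) (ts E ηc ηd Pmax SoCmin SoCmax SoCinit : ℝ)
    (b : ℕ → ℝ) : Prop :=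
  (∀ t ∈ Finset.Icc 1 T, |b t| ≤ Pmax) ∧
  (∀ t ∈ Finset.Icc 1 (T + 1),
    SoCmin ≤ socTraj SoCinit ts E ηc ηd b t ∧
    socTraj SoCinit ts E ηc ηd b t ≤ SoCmax)

/-- Regulation revenue of a schedule `b` with capacity `C` against signal `r`. -/
noncomputable def regRevenue (T : ℕ) (lc lmis lb C : ℝ) (r b : ℕ → ℝ) : ℝ :=
  lc * C * T - lmis * ∑ t ∈ Finset.Icc 1 T, |b t - C * r t|
    - lb * ∑ t ∈ Finset.Icc 1 T, |b t|

/-- Greedy threshold action at time `t` given state-of-charge `s`. -/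
noncomputable def greedyAction (ts E ηc ηd Pmax SoCmin SoCmax C : ℝ)
    (r : ℕ → ℝ) (s : ℝ) (t : ℕ) : ℝ :=
  if 0 ≤ r t then
    min (C * r t) (min Pmax (ηd * (s - SoCmin) * E / ts))
  else
    max (C * r t) (max (-Pmax) ((s - SoCmax) * E / (ηc * ts)))

/-- State-of-charge trajectory `SoC*` of the greedy threshold schedule
(`SoC* 1 = SoC_init`, then updated by the state-of-charge dynamics applied to
the greedy action). -/
noncomputable def greedySoC (ts E ηc ηd Pmax SoCmin SoCmax SoCinit C : ℝ)
    (r : ℕ → ℝ) : ℕ → ℝ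
  | 0 => SoCinit
  | 1 => SoCinit
  | (t + 2) =>
      let s := greedySoC ts E ηc ηd Pmax SoCmin SoCmax SoCinit C r (t + 1)
      let b := greedyAction ts E ηc ηd Pmax SoCmin SoCmax C r s (t + 1)
      s + (ηc * max (-b) 0 - max b 0 / ηd) * ts / E

/-- The greedy threshold schedule `b*`. -/
noncomputable def greedySchedule (ts E ηc ηd Pmax SoCmin SoCmax SoCinit C : ℝ)
    (r : ℕ → ℝ) (t : ℕ) : ℝ :=
  greedyAction ts E ηc ηd Pmax SoCmin SoCmax C r
    (greedySoC ts E ηc ηd Pmax SoCmin SoCmax SoCinit C r t) t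

section Aux

variable {ts E ηc ηd Pmax SoCmin SoCmax SoCinit C : ℝ} {r : ℕ → ℝ}

lemma greedyAction_nonneg (hts : 0 < ts) (hP : 0 ≤ Pmax) (hE : 0 < E)
    (hηd0 : 0 < ηd) (hC : 0 ≤ C) {s : ℝ} (hs : SoCmin ≤ s) {t : ℕ}
    (hrt : 0 ≤ r t) :
    0 ≤ greedyAction ts E ηc ηd Pmax SoCmin SoCmax C r s t := by
  unfold greedyAction
  rw [if_pos hrt]
  have h3 : 0 ≤ ηd * (s - SoCmin) * E / ts :=
    div_nonneg (mul_nonneg (mul_nonneg hηd0.le (sub_nonneg.mpr hs)) hE.le) hts.le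
  exact le_min (mul_nonneg hC hrt) (le_min hP h3)

lemma greedyAction_nonpos (hts : 0 < ts) (hP : 0 ≤ Pmax) (hE : 0 < E)
    (hηc0 : 0 < ηc) (hC : 0 ≤ C) {s : ℝ} (hs : s ≤ SoCmax) {t : ℕ}
    (hrt : r t < 0) :
    greedyAction ts E ηc ηd Pmax SoCmin SoCmax C r s t ≤ 0 := by
  unfold greedyAction
  rw [if_neg (not_le.mpr hrt)]
  have h1 : C * r t ≤ 0 := mul_nonpos_of_nonneg_of_nonpos hC hrt.le
  have h3 : (s - SoCmax) * E / (ηc * ts) ≤ 0 := by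
    apply div_nonpos_of_nonpos_of_nonneg
    · exact mul_nonpos_of_nonpos_of_nonneg (by linarith) hE.le
    · positivity
  exact max_le h1 (max_le (by linarith) h3)

lemma greedySoC_step (hts : 0 < ts) (hP : 0 ≤ Pmax) (hE : 0 < E)
    (hηc0 : 0 < ηc) (hηd0 : 0 < ηd) (hC : 0 ≤ C) {s : ℝ}
    (hs1 : SoCmin ≤ s) (hs2 : s ≤ SoCmax) {t : ℕ} :
    SoCmin ≤ s + (ηc * max (-(greedyAction ts E ηc ηd Pmax SoCmin SoCmax C r s t)) 0
        - max (greedyAction ts E ηc ηd Pmax SoCmin SoCmax C r s t) 0 / ηd) * ts / E ∧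
    s + (ηc * max (-(greedyAction ts E ηc ηd Pmax SoCmin SoCmax C r s t)) 0
        - max (greedyAction ts E ηc ηd Pmax SoCmin SoCmax C r s t) 0 / ηd) * ts / E ≤ SoCmax := by
  set b := greedyAction ts E ηc ηd Pmax SoCmin SoCmax C r s t with hb
  rcases le_or_gt 0 (r t) with hrt | hrt
  · have hb0 : 0 ≤ b := greedyAction_nonneg hts hP hE hηd0 hC hs1 hrt
    have hbup : b ≤ ηd * (s - SoCmin) * E / ts := by
      rw [hb]; unfold greedyAction; rw [if_pos hrt]
      exact le_trans (min_le_right _ _) (min_le_right _ _)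
    rw [max_eq_right (by linarith), max_eq_left hb0]
    have hbup' : b * ts ≤ ηd * (s - SoCmin) * E := (le_div_iff₀ hts).mp hbup
    have key : b / ηd * ts / E ≤ s - SoCmin := by
      rw [div_le_iff₀ hE, div_mul_eq_mul_div, div_le_iff₀ hηd0]
      nlinarith
    constructor
    · have : (ηc * 0 - b / ηd) * ts / E = -(b / ηd * ts / E) := by ring
      rw [this]; linarith
    · have h2 : 0 ≤ b / ηd * ts / E :=
        div_nonneg (mul_nonneg (div_nonneg hb0 hηd0.le) hts.le) hE.le
      have : (ηc * 0 - b / ηd) * ts / E = -(b / ηd * ts / E) := by ring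
      rw [this]; linarith
  · have hb0 : b ≤ 0 := greedyAction_nonpos hts hP hE hηc0 hC hs2 hrt
    have hblo : (s - SoCmax) * E / (ηc * ts) ≤ b := by
      rw [hb]; unfold greedyAction; rw [if_neg (not_le.mpr hrt)]
      exact le_trans (le_max_right _ _) (le_max_right _ _)
    rw [max_eq_left (by linarith), max_eq_right hb0]
    have key : ηc * (-b) * ts / E ≤ SoCmax - s := by
      rw [div_le_iff₀ hE]
      rw [div_le_iff₀ (by positivity : (0:ℝ) < ηc * ts)] at hblo
      nlinarith
    constructor
    · have h2 : 0 ≤ ηc * (-b) * ts / E :=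
        div_nonneg (mul_nonneg (mul_nonneg hηc0.le (neg_nonneg.mpr hb0)) hts.le) hE.le
      have : (ηc * (-b) - 0 / ηd) * ts / E = ηc * (-b) * ts / E := by ring
      rw [this]; linarith
    · have : (ηc * (-b) - 0 / ηd) * ts / E = ηc * (-b) * ts / E := by ring
      rw [this]; linarith

lemma greedySoC_bounds (hts : 0 < ts) (hP : 0 ≤ Pmax) (hE : 0 < E)
    (hηc0 : 0 < ηc) (hηd0 : 0 < ηd)
    (hSoC : SoCmin ≤ SoCmax) (hinit1 : SoCmin ≤ SoCinit) (hinit2 : SoCinit ≤ SoCmax)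
    (hC : 0 ≤ C) :
    ∀ t : ℕ, SoCmin ≤ greedySoC ts E ηc ηd Pmax SoCmin SoCmax SoCinit C r t ∧
      greedySoC ts E ηc ηd Pmax SoCmin SoCmax SoCinit C r t ≤ SoCmax := by
  intro t
  induction t using Nat.strong_induction_on with
  | _ t ih =>
    match t with
    | 0 => exact ⟨hinit1, hinit2⟩
    | 1 => exact ⟨hinit1, hinit2⟩
    | (t + 2) =>
      obtain ⟨h1, h2⟩ := ih (t + 1) (by omega)
      show SoCmin ≤ _ ∧ _
      rw [greedySoC]
      exact greedySoC_step hts hP hE hηc0 hηd0 hC h1 h2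

end Aux

/-- the greedy threshold schedule `b*` is feasible: it respects the
power limit, has the same sign as the regulation signal, and its trajectory
`SoC*` stays within the state-of-charge bounds. -/
theorem greedy_feasible
    (T : ℕ) (hT : 1 ≤ T)
    (ts E ηc ηd Pmax SoCmin SoCmax SoCinit : ℝ)
    (hts : 0 < ts) (hP : 0 ≤ Pmax) (hE : 0 < E)
    (hηc0 : 0 < ηc) (hηc1 : ηc ≤ 1) (hηd0 : 0 < ηd) (hηd1 : ηd ≤ 1)
    (hSoC : SoCmin ≤ SoCmax) (hinit1 : SoCmin ≤ SoCinit) (hinit2 : SoCinit ≤ SoCmax)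
    (r : ℕ → ℝ) (C : ℝ) (hC : 0 ≤ C) :
    (∀ t ∈ Finset.Icc 1 T,
      |greedySchedule ts E ηc ηd Pmax SoCmin SoCmax SoCinit C r t| ≤ Pmax) ∧
    (∀ t ∈ Finset.Icc 1 T,
      (0 ≤ r t → 0 ≤ greedySchedule ts E ηc ηd Pmax SoCmin SoCmax SoCinit C r t) ∧
      (r t < 0 → greedySchedule ts E ηc ηd Pmax SoCmin SoCmax SoCinit C r t ≤ 0)) ∧
    (∀ t ∈ Finset.Icc 1 (T + 1),
      SoCmin ≤ greedySoC ts E ηc ηd Pmax SoCmin SoCmax SoCinit C r t ∧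
      greedySoC ts E ηc ηd Pmax SoCmin SoCmax SoCinit C r t ≤ SoCmax) := by
  have hbnd := greedySoC_bounds (r := r) (SoCinit := SoCinit) hts hP hE hηc0 hηd0
    hSoC hinit1 hinit2 hC
  refine ⟨?_, ?_, fun t _ => hbnd t⟩
  · intro t _
    obtain ⟨h1, h2⟩ := hbnd t
    set s := greedySoC ts E ηc ηd Pmax SoCmin SoCmax SoCinit C r t
    rw [abs_le]
    unfold greedySchedule greedyAction
    rcases le_or_gt 0 (r t) with hrt | hrt
    · rw [if_pos hrt]
      have hnn : (0:ℝ) ≤ min (C * r t) (min Pmax (ηd * (s - SoCmin) * E / ts)) := by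
        have h3 : 0 ≤ ηd * (s - SoCmin) * E / ts :=
          div_nonneg (mul_nonneg (mul_nonneg hηd0.le (sub_nonneg.mpr h1)) hE.le) hts.le
        exact le_min (mul_nonneg hC hrt) (le_min hP h3)
      exact ⟨by linarith, le_trans (min_le_right _ _) (min_le_left _ _)⟩
    · rw [if_neg (not_le.mpr hrt)]
      have hnp : max (C * r t) (max (-Pmax) ((s - SoCmax) * E / (ηc * ts))) ≤ 0 := by
        have h1' : C * r t ≤ 0 := mul_nonpos_of_nonneg_of_nonpos hC hrt.le
        have h3 : (s - SoCmax) * E / (ηc * ts) ≤ 0 := by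
          apply div_nonpos_of_nonpos_of_nonneg
          · exact mul_nonpos_of_nonpos_of_nonneg (by linarith) hE.le
          · positivity
        exact max_le h1' (max_le (by linarith) h3)
      exact ⟨le_trans (le_max_left _ _) (le_max_right _ _), by linarith⟩
  · intro t _
    obtain ⟨h1, h2⟩ := hbnd t
    exact ⟨fun hrt => greedyAction_nonneg hts hP hE hηd0 hC h1 hrt,
      fun hrt => greedyAction_nonpos hts hP hE hηc0 hC h2 hrt⟩
end

section
/- Suppose 0 ≤ λ_mis ≤ λ_b. Then the identically-zero schedule is feasible and maximizes the regulation revenue over all feasible battery schedules: for every feasible schedule b and every capacity C ≥ 0, R(b) ≤ R(0) = λ_c·C·T − λ_mis·C·Σ_{t=1}^T |r(t)|. -/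
open Finset

/-- if `0 ≤ λ_mis ≤ λ_b`, the identically-zero schedule is feasible
and maximizes the regulation revenue over all feasible schedules, and its
revenue equals `λ_c·C·T − λ_mis·C·Σ_{t=1}^T |r t|`. -/
theorem zero_schedule_optimal
    (T : ℕ) (hT : 1 ≤ T)
    (ts E ηc ηd Pmax SoCmin SoCmax SoCinit : ℝ)
    (hts : 0 < ts) (hP : 0 ≤ Pmax) (hE : 0 < E)
    (hηc0 : 0 < ηc) (hηc1 : ηc ≤ 1) (hηd0 : 0 < ηd) (hηd1 : ηd ≤ 1)
    (hSoC : SoCmin ≤ SoCmax) (hinit1 : SoCmin ≤ SoCinit) (hinit2 : SoCinit ≤ SoCmax)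
    (r : ℕ → ℝ) (C : ℝ) (hC : 0 ≤ C)
    (lc lmis lb : ℝ) (hmis : 0 ≤ lmis) (hle : lmis ≤ lb) :
    FeasibleSchedule T ts E ηc ηd Pmax SoCmin SoCmax SoCinit (fun _ => 0) ∧
    (∀ b : ℕ → ℝ, FeasibleSchedule T ts E ηc ηd Pmax SoCmin SoCmax SoCinit b →
      regRevenue T lc lmis lb C r b ≤ regRevenue T lc lmis lb C r (fun _ => 0)) ∧
    regRevenue T lc lmis lb C r (fun _ => 0)
      = lc * C * T - lmis * C * ∑ t ∈ Finset.Icc 1 T, |r t| := by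

  have hzero : socTraj SoCinit ts E ηc ηd (fun _ => 0) = fun _ => SoCinit := by
    funext t
    simp [socTraj]
  refine ⟨⟨?_, ?_⟩, ?_, ?_⟩
  · intro t ht; simpa using hP
  · intro t ht; rw [hzero]; exact ⟨hinit1, hinit2⟩
  · intro b hb
    unfold regRevenue
    simp only [zero_sub, abs_neg, abs_zero, mul_zero, Finset.sum_const_zero, sub_zero]
    have key : lmis * ∑ t ∈ Finset.Icc 1 T, |C * r t|
        ≤ lmis * (∑ t ∈ Finset.Icc 1 T, |b t - C * r t|)
          + lb * ∑ t ∈ Finset.Icc 1 T, |b t| := by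
      have h1 : ∀ t ∈ Finset.Icc 1 T, lmis * |C * r t|
          ≤ lmis * |b t - C * r t| + lb * |b t| := by
        intro t _
        have h2 : |C * r t| ≤ |b t - C * r t| + |b t| := by
          have h3 := abs_sub_abs_le_abs_sub (C * r t) (b t)
          rw [abs_sub_comm] at h3
          linarith
        calc lmis * |C * r t| ≤ lmis * (|b t - C * r t| + |b t|) :=
              mul_le_mul_of_nonneg_left h2 hmis
          _ = lmis * |b t - C * r t| + lmis * |b t| := by ring
          _ ≤ lmis * |b t - C * r t| + lb * |b t| := by
              have := abs_nonneg (b t); nlinarith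
      calc lmis * ∑ t ∈ Finset.Icc 1 T, |C * r t|
          = ∑ t ∈ Finset.Icc 1 T, lmis * |C * r t| := by rw [Finset.mul_sum]
        _ ≤ ∑ t ∈ Finset.Icc 1 T, (lmis * |b t - C * r t| + lb * |b t|) :=
            Finset.sum_le_sum h1
        _ = lmis * (∑ t ∈ Finset.Icc 1 T, |b t - C * r t|)
            + lb * ∑ t ∈ Finset.Icc 1 T, |b t| := by
            rw [Finset.sum_add_distrib, Finset.mul_sum, Finset.mul_sum]
    linarith
  · unfold regRevenue
    simp only [zero_sub, abs_neg, abs_zero, mul_zero, Finset.sum_const_zero, sub_zero]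
    simp [abs_mul, abs_of_nonneg hC, Finset.mul_sum, mul_assoc]
end

section
/- Suppose 0 ≤ λ_b < λ_mis, and consider the regulation revenue maximization subject only to the power limit, i.e. over the set of schedules b : {1,…,T} → ℝ with |b(t)| ≤ P_max for all t (no state-of-charge constraint). Then the pointwise clamped schedule b*(t) = max(−P_max, min(C·r(t), P_max)) satisfies R(b) ≤ R(b*) for every b in this set. -/
/-- Regulation revenue of a schedule `b : Fin T → ℝ` with capacity `C` against
signal `r`:  `R(b) = λ_c·C·T − λ_mis·Σ_t |b t − C·r t| − λ_b·Σ_t |b t|`. -/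
noncomputable def regRevenueFin (T : ℕ) (lc lmis lb C : ℝ) (r b : Fin T → ℝ) : ℝ :=
  lc * C * T - lmis * ∑ t, |b t - C * r t| - lb * ∑ t, |b t|

lemma clamp_pointwise (Pmax x y lmis lb : ℝ) (hP : 0 ≤ Pmax)
    (hlb : 0 ≤ lb) (hle : lb ≤ lmis) (hy : |y| ≤ Pmax) :
    lmis * |max (-Pmax) (min x Pmax) - x| + lb * |max (-Pmax) (min x Pmax)| ≤
      lmis * |y - x| + lb * |y| := by
  have hy1 : -Pmax ≤ y := (abs_le.mp hy).1
  have hy2 : y ≤ Pmax := (abs_le.mp hy).2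
  rcases le_or_gt x (-Pmax) with hx | hx
  · have h1 : min x Pmax = x := min_eq_left (hx.trans (by linarith))
    have h2 : max (-Pmax) x = -Pmax := max_eq_left hx
    rw [h1, h2]
    have habs1 : |-Pmax - x| = -Pmax - x := abs_of_nonneg (by linarith)
    have habs2 : |(-Pmax : ℝ)| = Pmax := by rw [abs_neg, abs_of_nonneg hP]
    have habs3 : |y - x| = y - x := abs_of_nonneg (by linarith)
    have hby : -y ≤ |y| := neg_le_abs y
    rw [habs1, habs2, habs3]
    nlinarith [abs_nonneg y]
  · rcases le_or_gt x Pmax with hx2 | hx2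
    · have h1 : min x Pmax = x := min_eq_left hx2
      have h2 : max (-Pmax) x = x := max_eq_right hx.le
      rw [h1, h2, sub_self, abs_zero]
      have : |x| ≤ |y - x| + |y| := by
        calc |x| = |(x - y) + y| := by ring_nf
        _ ≤ |x - y| + |y| := abs_add_le _ _
        _ = |y - x| + |y| := by rw [abs_sub_comm]
      nlinarith [abs_nonneg (y - x)]
    · have h1 : min x Pmax = Pmax := min_eq_right hx2.le
      have h2 : max (-Pmax) Pmax = Pmax := max_eq_right (by linarith)
      rw [h1, h2]
      have habs1 : |Pmax - x| = x - Pmax := by rw [abs_sub_comm]; exact abs_of_nonneg (by linarith)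
      have habs2 : |Pmax| = Pmax := abs_of_nonneg hP
      have habs3 : |y - x| = x - y := by rw [abs_sub_comm]; exact abs_of_nonneg (by linarith)
      have hby : y ≤ |y| := le_abs_self y
      rw [habs1, habs2, habs3]
      nlinarith [abs_nonneg y]

/-- with `0 ≤ λ_b < λ_mis` and only the power limit `|b t| ≤ P_max`
(no state-of-charge constraint), the pointwise clamped schedule
`b* t = max (−P_max) (min (C·r t) P_max)` maximizes the regulation revenue. -/
theorem clamped_optimal_power_only
    (T : ℕ) (hT : 1 ≤ T)
    (Pmax : ℝ) (hP : 0 ≤ Pmax)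
    (r : Fin T → ℝ) (C : ℝ) (hC : 0 ≤ C)
    (lc lmis lb : ℝ) (hmis : 0 ≤ lmis) (hlb : 0 ≤ lb) (hlt : lb < lmis)
    (b : Fin T → ℝ) (hb : ∀ t, |b t| ≤ Pmax) :
    regRevenueFin T lc lmis lb C r b ≤
      regRevenueFin T lc lmis lb C r (fun t => max (-Pmax) (min (C * r t) Pmax)) := by
  unfold regRevenueFin
  have key : ∑ t, (lmis * |max (-Pmax) (min (C * r t) Pmax) - C * r t|
        + lb * |max (-Pmax) (min (C * r t) Pmax)|)
      ≤ ∑ t, (lmis * |b t - C * r t| + lb * |b t|) :=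
    Finset.sum_le_sum fun t _ =>
      clamp_pointwise Pmax (C * r t) (b t) lmis lb hP hlb hlt.le (hb t)
  simp only [Finset.sum_add_distrib, ← Finset.mul_sum] at key
  linarith
end

section
/- Suppose 0 ≤ λ_b < λ_mis, a ≤ 0, and L, M ≥ 0. Then max(a, −L) is the unique minimizer of g_a over the interval [−L, M]: g_a(max(a,−L)) ≤ g_a(b) for every b ∈ [−L, M], with equality only when b = max(a, −L). -/
/-- Single-time-step regulation cost `g_a(b) = λ_mis·|b − a| + λ_b·|b|`. -/
noncomputable def stepCost (lmis lb a b : ℝ) : ℝ := lmis * |b - a| + lb * |b|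

/-- if `0 ≤ λ_b < λ_mis`, `a ≤ 0` and `L, M ≥ 0`, then `max a (−L)`
is the unique minimizer of `g_a` over `[−L, M]`. -/
theorem max_clamp_unique_minimizer
    (lmis lb a L M : ℝ)
    (hlb : 0 ≤ lb) (hlt : lb < lmis)
    (ha : a ≤ 0) (hL : 0 ≤ L) (hM : 0 ≤ M) :
    ∀ b : ℝ, -L ≤ b → b ≤ M →
      stepCost lmis lb a (max a (-L)) ≤ stepCost lmis lb a b ∧
      (stepCost lmis lb a (max a (-L)) = stepCost lmis lb a b → b = max a (-L)) := by
  intro b hb1 hb2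
  unfold stepCost
  rcases le_total a (-L) with h | h
  · rw [max_eq_right h]
    have hba : (0:ℝ) ≤ b - a := by linarith
    rw [abs_of_nonneg hba, abs_of_nonneg (show (0:ℝ) ≤ -L - a by linarith),
      abs_of_nonpos (show -L ≤ (0:ℝ) by linarith)]
    rcases abs_cases b with ⟨h1, h2⟩ | ⟨h1, h2⟩ <;> rw [h1] <;>
      exact ⟨by nlinarith, fun he => by nlinarith⟩
  · rw [max_eq_left h]
    rw [sub_self, abs_zero, abs_of_nonpos ha]
    rcases abs_cases b with ⟨h1, h2⟩ | ⟨h1, h2⟩ <;>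
      rcases abs_cases (b - a) with ⟨h3, h4⟩ | ⟨h3, h4⟩ <;> rw [h1, h3] <;>
      exact ⟨by nlinarith, fun he => by nlinarith⟩
end
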